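/- The group with presentation ⟨x, y, z ∣ x², y², z², (xy)³, (xz)³, (yz)³, (xzyz)⁴⟩ has order 96. -/

import Mathlib

/-!
Without the last relator, x, y, z are the simple reflections of the affine Weyl group of type
Ã₂ ≅ ℤ² ⋊ S₃: x and y generate S₃, the translations A = xzyz and B = yzxz commute and span the
lattice, x and y act on them by conjugation as on the root lattice, and z = (AB)⁻¹·xyx. The
relator A⁴ (hence also B⁴, as B⁻¹ = zAz) cuts the lattice down to (ℤ/4)², so every element is
AⁱBʲw with i, j < 4 and w one of the six elements of ⟨x, y⟩. These 96 words are already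
distinct in the action of the affine reflections on the root lattice reduced mod 4.
-/

namespace G2

def x : FreeGroup (Fin 3) := FreeGroup.of 0
def y : FreeGroup (Fin 3) := FreeGroup.of 1
def z : FreeGroup (Fin 3) := FreeGroup.of 2

/-- Relators of the presentation ⟨x, y, z ∣ x², y², z², (xy)³, (xz)³, (yz)³, (xzyz)⁴⟩. -/
def rels : Set (FreeGroup (Fin 3)) :=
  {x ^ 2, y ^ 2, z ^ 2, (x * y) ^ 3, (x * z) ^ 3, (y * z) ^ 3, (x * z * y * z) ^ 4}

open Function

section NormalForm

variable {G : Type*} [Group G]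

theorem braid_of_mul_pow_three_eq_one {a b : G} (ha : a⁻¹ = a) (hb : b⁻¹ = b)
    (h : (a * b) ^ 3 = 1) : a * b * a = b * a * b := by
  have : a * b * a * (b * a * b) = 1 := by
    rw [← h, pow_succ, sq]; simp only [mul_assoc]
  rw [eq_inv_of_mul_eq_one_left this]
  simp only [mul_inv_rev, ha, hb, mul_assoc]

theorem mul_pow_mul_pow_eq_conj (g u v w : G) (i j : ℕ) :
    g * (u ^ i * v ^ j * w) = (g * u * g⁻¹) ^ i * (g * v * g⁻¹) ^ j * (g * w) := by
  simp only [conj_pow]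
  group

structure SatisfiesRels (a b c : G) : Prop where
  sq_a : a ^ 2 = 1
  sq_b : b ^ 2 = 1
  sq_c : c ^ 2 = 1
  pow_three_ab : (a * b) ^ 3 = 1
  pow_three_ac : (a * c) ^ 3 = 1
  pow_three_bc : (b * c) ^ 3 = 1
  pow_four_acbc : (a * c * b * c) ^ 4 = 1

theorem satisfiesRels_iff (f : Fin 3 → G) :
    SatisfiesRels (f 0) (f 1) (f 2) ↔ ∀ r ∈ rels, FreeGroup.lift f r = 1 := by
  simp only [rels, x, y, z, Set.mem_insert_iff, Set.mem_singleton_iff, forall_eq_or_imp,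
    forall_eq, map_pow, map_mul, FreeGroup.lift_apply_of]
  exact ⟨fun ⟨h₁, h₂, h₃, h₄, h₅, h₆, h₇⟩ => ⟨h₁, h₂, h₃, h₄, h₅, h₆, h₇⟩,
    fun ⟨h₁, h₂, h₃, h₄, h₅, h₆, h₇⟩ => ⟨h₁, h₂, h₃, h₄, h₅, h₆, h₇⟩⟩

def transl₁ (a b c : G) : G := a * c * b * c

def transl₂ (a b c : G) : G := b * c * a * c

def weyl (a b : G) : Fin 6 → G := ![1, a, b, a * b, b * a, a * b * a]

def normalForm (a b c : G) (i j : ℕ) (s : Fin 6) : G :=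
  transl₁ a b c ^ i * transl₂ a b c ^ j * weyl a b s

def boundedNormalForm (a b c : G) (k : Fin 4 × Fin 4 × Fin 6) : G :=
  normalForm a b c k.1 k.2.1 k.2.2

def normalForms (a b c : G) : Set G := {g | ∃ i j s, normalForm a b c i j s = g}

theorem map_normalForm {H : Type*} [Group H] (φ : G →* H) (a b c : G) (i j : ℕ) (s : Fin 6) :
    φ (normalForm a b c i j s) = normalForm (φ a) (φ b) (φ c) i j s := by
  fin_cases s <;> simp [normalForm, transl₁, transl₂, weyl]

theorem transl₁_mul_normalForm (a b c : G) (i j : ℕ) (s : Fin 6) :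
    transl₁ a b c * normalForm a b c i j s = normalForm a b c (i + 1) j s := by
  simp only [normalForm, pow_succ', mul_assoc]

theorem weyl_mem_normalForms (a b c : G) (s : Fin 6) : weyl a b s ∈ normalForms a b c :=
  ⟨0, 0, s, by simp [normalForm]⟩

end NormalForm

namespace SatisfiesRels

variable {G : Type*} [Group G] {a b c : G} (h : SatisfiesRels a b c)
include h

local notation "𝔸" => transl₁ a b c
local notation "𝔹" => transl₂ a b c

theorem a_mul_self : a * a = 1 := by rw [← sq, h.sq_a]
theorem b_mul_self : b * b = 1 := by rw [← sq, h.sq_b]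
theorem c_mul_self : c * c = 1 := by rw [← sq, h.sq_c]

theorem inv_a : a⁻¹ = a := inv_eq_of_mul_eq_one_right h.a_mul_self
theorem inv_b : b⁻¹ = b := inv_eq_of_mul_eq_one_right h.b_mul_self
theorem inv_c : c⁻¹ = c := inv_eq_of_mul_eq_one_right h.c_mul_self

theorem a_mul_a (t : G) : a * (a * t) = t := by rw [← mul_assoc, h.a_mul_self, one_mul]
theorem b_mul_b (t : G) : b * (b * t) = t := by rw [← mul_assoc, h.b_mul_self, one_mul]
theorem c_mul_c (t : G) : c * (c * t) = t := by rw [← mul_assoc, h.c_mul_self, one_mul]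

theorem braid_ab : a * b * a = b * a * b :=
  braid_of_mul_pow_three_eq_one h.inv_a h.inv_b h.pow_three_ab
theorem braid_ac : a * c * a = c * a * c :=
  braid_of_mul_pow_three_eq_one h.inv_a h.inv_c h.pow_three_ac
theorem braid_bc : b * c * b = c * b * c :=
  braid_of_mul_pow_three_eq_one h.inv_b h.inv_c h.pow_three_bc

theorem braid_ca' (t : G) : c * (a * (c * t)) = a * (c * (a * t)) := by
  simp only [← mul_assoc, h.braid_ac]
theorem braid_cb' (t : G) : c * (b * (c * t)) = b * (c * (b * t)) := by
  simp only [← mul_assoc, h.braid_bc]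

theorem transl₁_mul_transl₂ : 𝔸 * 𝔹 = a * b * a * c := by
  simp only [transl₁, transl₂, mul_assoc]
  rw [h.braid_cb']
  simp only [h.b_mul_b, h.c_mul_c]

theorem transl₂_mul_transl₁ : 𝔹 * 𝔸 = b * a * b * c := by
  simp only [transl₁, transl₂, mul_assoc]
  rw [h.braid_ca']
  simp only [h.a_mul_a, h.c_mul_c]

theorem commute_transl : Commute 𝔸 𝔹 := by
  rw [Commute, SemiconjBy, h.transl₁_mul_transl₂, h.transl₂_mul_transl₁, h.braid_ab]

theorem conj_a_transl₁ : a * 𝔸 * a⁻¹ = 𝔸⁻¹ := by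
  simp only [transl₁, mul_inv_rev, h.inv_a, h.inv_b, h.inv_c, mul_assoc, h.a_mul_a]

theorem conj_a_transl₂ : a * 𝔹 * a⁻¹ = 𝔸 * 𝔹 := by
  rw [h.transl₁_mul_transl₂, h.inv_a]
  simp only [transl₂, mul_assoc]
  rw [h.braid_ca', h.a_mul_self, mul_one]

theorem conj_b_transl₁ : b * 𝔸 * b⁻¹ = 𝔸 * 𝔹 := by
  rw [h.commute_transl.eq, h.transl₂_mul_transl₁, h.inv_b]
  simp only [transl₁, mul_assoc]
  rw [h.braid_cb', h.b_mul_self, mul_one]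

theorem conj_b_transl₂ : b * 𝔹 * b⁻¹ = 𝔹⁻¹ := by
  simp only [transl₂, mul_inv_rev, h.inv_a, h.inv_b, h.inv_c, mul_assoc, h.b_mul_b]

theorem conj_c_transl₁ : c * 𝔸 * c⁻¹ = 𝔹⁻¹ := by
  simp only [transl₁, transl₂, mul_inv_rev, h.inv_a, h.inv_b, h.inv_c, mul_assoc, h.c_mul_self,
    mul_one]

theorem transl_mul_c : 𝔸 * 𝔹 * c = a * b * a := by
  rw [h.transl₁_mul_transl₂, mul_assoc _ c, ← sq, h.sq_c, mul_one]

theorem transl₁_pow_four : 𝔸 ^ 4 = 1 := h.pow_four_acbc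

theorem transl₂_pow_four : 𝔹 ^ 4 = 1 := by
  rw [← inv_eq_one, ← inv_pow, ← h.conj_c_transl₁, conj_pow, h.transl₁_pow_four, mul_one,
    mul_inv_cancel]

theorem inv_transl₁_mem : 𝔸⁻¹ ∈ Submonoid.closure {𝔸, 𝔹} := by
  rw [inv_eq_of_mul_eq_one_right (by rw [← pow_succ', h.transl₁_pow_four] : 𝔸 * 𝔸 ^ 3 = 1)]
  exact pow_mem (Submonoid.subset_closure (by simp)) 3

theorem inv_transl₂_mem : 𝔹⁻¹ ∈ Submonoid.closure {𝔸, 𝔹} := by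
  rw [inv_eq_of_mul_eq_one_right (by rw [← pow_succ', h.transl₂_pow_four] : 𝔹 * 𝔹 ^ 3 = 1)]
  exact pow_mem (Submonoid.subset_closure (by simp)) 3

theorem transl₂_mul_normalForm (i j : ℕ) (s : Fin 6) :
    𝔹 * normalForm a b c i j s = normalForm a b c i (j + 1) s := by
  simp only [normalForm, pow_succ', ← mul_assoc, ← (h.commute_transl.pow_left i).eq]

theorem mul_mem_normalForms {n g : G} (hn : n ∈ Submonoid.closure {𝔸, 𝔹})
    (hg : g ∈ normalForms a b c) : n * g ∈ normalForms a b c := by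
  induction hn using Submonoid.closure_induction generalizing g with
  | mem n hn =>
    obtain ⟨i, j, s, rfl⟩ := hg
    rcases hn with rfl | rfl
    exacts [⟨_, _, _, (transl₁_mul_normalForm a b c i j s).symm⟩,
      ⟨_, _, _, (h.transl₂_mul_normalForm i j s).symm⟩]
  | one => simpa using hg
  | mul n m _ _ hn hm => rw [mul_assoc]; exact hn (hm hg)

theorem a_mul_weyl_mem (s : Fin 6) : a * weyl a b s ∈ Set.range (weyl a b) := by
  fin_cases s
  · exact ⟨1, by simp [weyl]⟩
  · exact ⟨0, by simp [weyl, h.a_mul_self]⟩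
  · exact ⟨3, by simp [weyl]⟩
  · exact ⟨2, by simp [weyl, ← mul_assoc, h.a_mul_self]⟩
  · exact ⟨5, by simp [weyl, mul_assoc]⟩
  · exact ⟨4, by simp [weyl, mul_assoc, h.a_mul_a]⟩

theorem b_mul_weyl_mem (s : Fin 6) : b * weyl a b s ∈ Set.range (weyl a b) := by
  fin_cases s
  · exact ⟨2, by simp [weyl]⟩
  · exact ⟨4, by simp [weyl]⟩
  · exact ⟨0, by simp [weyl, h.b_mul_self]⟩
  · exact ⟨5, by simp [weyl, ← mul_assoc, h.braid_ab]⟩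
  · exact ⟨1, by simp [weyl, ← mul_assoc, h.b_mul_self]⟩
  · exact ⟨3, by simp [weyl, h.braid_ab, mul_assoc, h.b_mul_b]⟩

theorem a_mul_mem {g : G} (hg : g ∈ normalForms a b c) : a * g ∈ normalForms a b c := by
  obtain ⟨i, j, s, rfl⟩ := hg
  obtain ⟨t, ht⟩ := h.a_mul_weyl_mem s
  rw [normalForm, mul_pow_mul_pow_eq_conj, h.conj_a_transl₁, h.conj_a_transl₂, ← ht]
  refine h.mul_mem_normalForms (mul_mem (pow_mem h.inv_transl₁_mem i) (pow_mem ?_ j))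
    (weyl_mem_normalForms a b c t)
  exact mul_mem (Submonoid.subset_closure (by simp)) (Submonoid.subset_closure (by simp))

theorem b_mul_mem {g : G} (hg : g ∈ normalForms a b c) : b * g ∈ normalForms a b c := by
  obtain ⟨i, j, s, rfl⟩ := hg
  obtain ⟨t, ht⟩ := h.b_mul_weyl_mem s
  rw [normalForm, mul_pow_mul_pow_eq_conj, h.conj_b_transl₁, h.conj_b_transl₂, ← ht]
  refine h.mul_mem_normalForms (mul_mem (pow_mem ?_ i) (pow_mem h.inv_transl₂_mem j))
    (weyl_mem_normalForms a b c t)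
  exact mul_mem (Submonoid.subset_closure (by simp)) (Submonoid.subset_closure (by simp))

theorem c_mul_mem {g : G} (hg : g ∈ normalForms a b c) : c * g ∈ normalForms a b c := by
  have hc : c * g = 𝔹⁻¹ * 𝔸⁻¹ * (a * (b * (a * g))) := by
    rw [← mul_assoc a, ← mul_assoc (a * b), ← h.transl_mul_c]
    group
  rw [hc]
  exact h.mul_mem_normalForms (mul_mem h.inv_transl₂_mem h.inv_transl₁_mem)
    (h.a_mul_mem (h.b_mul_mem (h.a_mul_mem hg)))

theorem mem_normalForms_of_mem_closure {g : G} (hg : g ∈ Subgroup.closure {a, b, c}) :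
    g ∈ normalForms a b c := by
  induction hg using Subgroup.closure_induction_left with
  | one => exact ⟨0, 0, 0, by simp [normalForm, weyl]⟩
  | mul_left u hu g _ hg =>
    rcases hu with rfl | rfl | rfl
    exacts [h.a_mul_mem hg, h.b_mul_mem hg, h.c_mul_mem hg]
  | inv_mul_cancel u hu g _ hg =>
    rcases hu with rfl | rfl | rfl
    · rw [h.inv_a]; exact h.a_mul_mem hg
    · rw [h.inv_b]; exact h.b_mul_mem hg
    · rw [h.inv_c]; exact h.c_mul_mem hg

theorem mem_range_boundedNormalForm {g : G} (hg : g ∈ normalForms a b c) :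
    g ∈ Set.range (boundedNormalForm a b c) := by
  obtain ⟨i, j, s, rfl⟩ := hg
  refine ⟨(Fin.ofNat 4 i, Fin.ofNat 4 j, s), ?_⟩
  rw [boundedNormalForm, normalForm, normalForm, Fin.val_ofNat, Fin.val_ofNat,
    ← pow_eq_pow_mod _ h.transl₁_pow_four, ← pow_eq_pow_mod _ h.transl₂_pow_four]

end SatisfiesRels

section AffineAction

open Equiv

/- Coordinates with respect to the simple roots α₁, α₂ of A₂: `refl₁`, `refl₂` are the simple
reflections and `refl₀` is the reflection in the affine wall ⟨v, θ^∨⟩ = 1 of the highest root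
θ = α₁ + α₂, all reduced mod 4. -/
def refl₁ : Perm (ZMod 4 × ZMod 4) :=
  Involutive.toPerm (fun v => (v.2 - v.1, v.2)) fun v => by ext <;> simp

def refl₂ : Perm (ZMod 4 × ZMod 4) :=
  Involutive.toPerm (fun v => (v.1, v.1 - v.2)) fun v => by ext <;> simp

def refl₀ : Perm (ZMod 4 × ZMod 4) :=
  Involutive.toPerm (fun v => (1 - v.2, 1 - v.1)) fun v => by ext <;> simp

theorem satisfiesRels_refl : SatisfiesRels refl₁ refl₂ refl₀ := by
  constructor <;> decide

set_option maxRecDepth 100000 in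
theorem injective_boundedNormalForm_refl : Injective (boundedNormalForm refl₁ refl₂ refl₀) := by
  decide

end AffineAction

theorem satisfiesRels_of : SatisfiesRels (PresentedGroup.of (rels := rels) 0)
    (PresentedGroup.of 1) (PresentedGroup.of 2) :=
  (satisfiesRels_iff _).2 fun r hr => by
    rw [show FreeGroup.lift PresentedGroup.of = PresentedGroup.mk rels from
      FreeGroup.ext_hom _ _ fun _ => rfl]
    exact PresentedGroup.one_of_mem hr

theorem closure_of_eq_top :
    Subgroup.closure {PresentedGroup.of (rels := rels) 0, PresentedGroup.of 1, PresentedGroup.of 2}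
      = ⊤ := by
  rw [← PresentedGroup.closure_range_of rels]
  congr 1
  ext g
  simp [Fin.exists_fin_succ, eq_comm]

theorem surjective_boundedNormalForm_of :
    Surjective (boundedNormalForm (PresentedGroup.of (rels := rels) 0) (PresentedGroup.of 1)
      (PresentedGroup.of 2)) := fun g =>
  satisfiesRels_of.mem_range_boundedNormalForm
    (satisfiesRels_of.mem_normalForms_of_mem_closure (closure_of_eq_top ▸ Subgroup.mem_top g))

theorem injective_boundedNormalForm_of :
    Injective (boundedNormalForm (PresentedGroup.of (rels := rels) 0) (PresentedGroup.of 1)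
      (PresentedGroup.of 2)) := by
  let ρ :=
    PresentedGroup.toGroup ((satisfiesRels_iff ![refl₁, refl₂, refl₀]).1 satisfiesRels_refl)
  refine Injective.of_comp (f := ρ) ?_
  convert injective_boundedNormalForm_refl using 1
  ext1 k
  simp [boundedNormalForm, map_normalForm, ρ, PresentedGroup.toGroup.of]

/-- The group ⟨x, y, z ∣ x², y², z², (xy)³, (xz)³, (yz)³, (xzyz)⁴⟩ has order 96. -/
theorem order_eq : Nat.card (PresentedGroup rels) = 96 := by
  rw [← Nat.card_eq_of_bijective _
    ⟨injective_boundedNormalForm_of, surjective_boundedNormalForm_of⟩]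
  simp

end G2
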